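/- arXiv:2110.04826 — 2 statements merged into one kernel-verified Lean document; each statement's English description precedes it below -/
import Mathlib

section
/- Under the hypotheses of the previous statement, suppose additionally that each $e_m$ is Lipschitz with $K_m = \|e_m'\|_{\infty}$, the $e_m$ are uniformly bounded, and there exists $\alpha \in (0,2]$ with $\sum_{m=1}^{\infty} \gamma_m K_m^{\alpha} < \infty$. Then $|K - \mathrm{Tr}(Q)| \le C h^{\alpha}$ for a constant $C$ independent of the maximal mesh size $h = \max_j |I_j|$, provided $\sum_j h_j \le C'$ (fixed total domain length). -/
/-!
On each cell `I_j`, the `k + 1` basis functions are orthogonal, so the weighted sum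
`∑_l μ_j^l (∫ φ_j^l f)^2` is the energy of the orthogonal projection of `f` and is at most
`∫_{I_j} f^2` (Bessel). Since `φ_j^0 = 1`, it is at least the energy of the mean, and
`∫_{I_j} (f - f̄)^2 ≤ ω^2 |I_j|` with `ω = min (K h, 2M)` the oscillation of a `K`-Lipschitz,
`M`-bounded `f` on a cell. Interpolating, `ω^2 ≤ K^α h^α (2M)^(2-α)`. Summing over the cells and
then over the modes `e_m` with weights `γ_m`, using `∑_j ∫_{I_j} e_m^2 = 1`, gives
`|K - Tr Q| ≤ (k + 1) (2M)^(2-α) |C'| (∑_m γ_m K_m^α) h^α`.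

The basis functions are not assumed measurable, only `φ^2` and `φ e_m` integrable. Bessel's
inequality is therefore applied only on cells where `f` has no zero, where `φ = (φ f) / f` is
measurable; on the other cells `|f| ≤ ω` and Cauchy–Schwarz bounds every term by `ω^2 |I_j|`.
-/

open MeasureTheory intervalIntegral Set

section InnerProductSpace

variable {E : Type*} [NormedAddCommGroup E] [InnerProductSpace ℝ E]

theorem sum_inv_inner_self_mul_sq_inner_le {ι : Type*} [Fintype ι] {v : ι → E}
    (horth : Pairwise fun i j => inner ℝ (v i) (v j) = 0) (x : E) :
    ∑ i, (inner ℝ (v i) (v i))⁻¹ * inner ℝ (v i) x ^ 2 ≤ inner ℝ x x := by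
  set c : ι → ℝ := fun i => (inner ℝ (v i) (v i))⁻¹ * inner ℝ (v i) x
  set p : E := ∑ i, c i • v i
  have hc : ∀ i, c i * inner ℝ (v i) x = (inner ℝ (v i) (v i))⁻¹ * inner ℝ (v i) x ^ 2 :=
    fun i => by ring
  have hcc : ∀ i, c i * c i * inner ℝ (v i) (v i)
      = (inner ℝ (v i) (v i))⁻¹ * inner ℝ (v i) x ^ 2 := by
    intro i
    rcases eq_or_ne (inner ℝ (v i) (v i)) 0 with h | h
    · simp only [c, h, inv_zero, zero_mul, mul_zero]
    · simp only [c]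
      field_simp
  have hpx : inner ℝ p x = ∑ i, (inner ℝ (v i) (v i))⁻¹ * inner ℝ (v i) x ^ 2 := by
    simp only [p, sum_inner, real_inner_smul_left, hc]
  have hpp : inner ℝ p p = ∑ i, (inner ℝ (v i) (v i))⁻¹ * inner ℝ (v i) x ^ 2 := by
    simp only [p, sum_inner, inner_sum, real_inner_smul_left, real_inner_smul_right]
    refine Finset.sum_congr rfl fun i _ => ?_
    rw [Finset.sum_eq_single i (fun j _ hji => by rw [horth hji]; ring) (by simp), ← hcc]
    ring
  have hnonneg := real_inner_self_nonneg (x := x - p)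
  rw [inner_sub_left, inner_sub_right, inner_sub_right, real_inner_comm p x, hpx, hpp]
    at hnonneg
  linarith

end InnerProductSpace

section L2

variable {α : Type*} [MeasurableSpace α] {μ : Measure α} {φ f : α → ℝ}

theorem MeasureTheory.MemLp.inner_toLp_eq_integral_mul {u w : α → ℝ} (hu : MemLp u 2 μ)
    (hw : MemLp w 2 μ) : inner ℝ hu.toLp hw.toLp = ∫ s, u s * w s ∂μ := by
  rw [L2.inner_def]
  refine integral_congr_ae ?_
  filter_upwards [hu.coeFn_toLp, hw.coeFn_toLp] with s hus hws
  rw [Real.inner_apply, hus, hws]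

theorem sq_integral_mul_le_of_aestronglyMeasurable (hf : AEStronglyMeasurable f μ)
    (hφ2 : Integrable (fun s => φ s ^ 2) μ) (hf2 : Integrable (fun s => f s ^ 2) μ)
    (hφf : Integrable (fun s => φ s * f s) μ) :
    (∫ s, φ s * f s ∂μ) ^ 2 ≤ (∫ s, φ s ^ 2 ∂μ) * ∫ s, f s ^ 2 ∂μ := by
  -- `φ` itself need not be measurable; `v` is, and has the same product with `f`.
  set v : α → ℝ := fun s => φ s * f s / f s
  have hvf : ∀ s, v s * f s = φ s * f s := fun s => by
    rcases eq_or_ne (f s) 0 with h | h <;> simp [v, h]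
  have hv2 : ∀ s, v s ^ 2 ≤ φ s ^ 2 := fun s => by
    rcases eq_or_ne (f s) 0 with h | h <;> simp [v, h, sq_nonneg]
  have hv : AEStronglyMeasurable v μ :=
    (hφf.aestronglyMeasurable.aemeasurable.div hf.aemeasurable).aestronglyMeasurable
  have hv2i : Integrable (fun s => v s ^ 2) μ :=
    hφ2.mono (hv.pow 2) (ae_of_all _ fun s => by
      simpa only [Real.norm_eq_abs, abs_of_nonneg (sq_nonneg (v s)),
        abs_of_nonneg (sq_nonneg (φ s))] using hv2 s)
  have hvL : MemLp v 2 μ := (memLp_two_iff_integrable_sq hv).2 hv2i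
  have hfL : MemLp f 2 μ := (memLp_two_iff_integrable_sq hf).2 hf2
  have hcs := real_inner_mul_inner_self_le hvL.toLp hfL.toLp
  simp only [MemLp.inner_toLp_eq_integral_mul, hvf, ← sq] at hcs
  calc (∫ s, φ s * f s ∂μ) ^ 2 ≤ (∫ s, v s ^ 2 ∂μ) * ∫ s, f s ^ 2 ∂μ := hcs
    _ ≤ (∫ s, φ s ^ 2 ∂μ) * ∫ s, f s ^ 2 ∂μ :=
      mul_le_mul_of_nonneg_right (integral_mono hv2i hφ2 hv2)
        (integral_nonneg fun s => sq_nonneg _)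

theorem sum_inv_integral_sq_mul_sq_integral_mul_le {ι : Type*} [Fintype ι] {φ : ι → α → ℝ}
    (hφ : ∀ i, MemLp (φ i) 2 μ) (hf : MemLp f 2 μ)
    (horth : Pairwise fun i j => ∫ s, φ i s * φ j s ∂μ = 0) :
    ∑ i, (∫ s, φ i s ^ 2 ∂μ)⁻¹ * (∫ s, φ i s * f s ∂μ) ^ 2 ≤ ∫ s, f s ^ 2 ∂μ := by
  have hbessel := sum_inv_inner_self_mul_sq_inner_le (v := fun i => (hφ i).toLp)
    (fun i j hij => by simpa only [MemLp.inner_toLp_eq_integral_mul] using horth hij) hf.toLp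
  simpa only [MemLp.inner_toLp_eq_integral_mul, ← sq] using hbessel

theorem MeasureTheory.AEStronglyMeasurable.of_mul_of_ne_zero
    (hφf : AEStronglyMeasurable (fun s => φ s * f s) μ) (hf : AEMeasurable f μ)
    (hne : ∀ᵐ s ∂μ, f s ≠ 0) : AEStronglyMeasurable φ μ := by
  refine (hφf.aemeasurable.div hf).aestronglyMeasurable.congr ?_
  filter_upwards [hne] with s hs
  simp [hs]

end L2

section Interval

variable {a b ω : ℝ} {f : ℝ → ℝ}

theorem inv_integral_sq_mul_sq_integral_mul_nonneg (hab : a ≤ b) (φ f : ℝ → ℝ) :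
    0 ≤ (∫ s in a..b, φ s ^ 2)⁻¹ * (∫ s in a..b, φ s * f s) ^ 2 :=
  mul_nonneg (inv_nonneg.2 (integral_nonneg hab fun _ _ => sq_nonneg _)) (sq_nonneg _)

theorem inv_integral_sq_mul_sq_integral_mul_le (hab : a ≤ b) {φ : ℝ → ℝ} (hf : Continuous f)
    (hφ2 : IntervalIntegrable (fun s => φ s ^ 2) volume a b)
    (hφf : IntervalIntegrable (fun s => φ s * f s) volume a b) :
    (∫ s in a..b, φ s ^ 2)⁻¹ * (∫ s in a..b, φ s * f s) ^ 2 ≤ ∫ s in a..b, f s ^ 2 := by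
  have hf2 : IntervalIntegrable (fun s => f s ^ 2) volume a b := (hf.pow 2).intervalIntegrable a b
  rw [intervalIntegrable_iff_integrableOn_Ioc_of_le hab] at hφ2 hφf hf2
  simp only [integral_of_le hab]
  exact inv_mul_le_of_le_mul₀ (integral_nonneg fun s => sq_nonneg _)
    (integral_nonneg fun s => sq_nonneg _)
    (sq_integral_mul_le_of_aestronglyMeasurable hf.aestronglyMeasurable hφ2 hf2 hφf)

theorem integral_sq_le_of_abs_le (hab : a ≤ b) (hf : Continuous f)
    (hω : ∀ s ∈ Icc a b, |f s| ≤ ω) : ∫ s in a..b, f s ^ 2 ≤ ω ^ 2 * (b - a) := by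
  calc ∫ s in a..b, f s ^ 2 ≤ ∫ _ in a..b, ω ^ 2 :=
        integral_mono_on hab ((hf.pow 2).intervalIntegrable a b) intervalIntegrable_const
          fun s hs => sq_le_sq' (abs_le.1 (hω s hs)).1 (abs_le.1 (hω s hs)).2
    _ = ω ^ 2 * (b - a) := by rw [intervalIntegral.integral_const, smul_eq_mul, mul_comm]

theorem integral_sq_sub_average_sq_eq (hab : a < b) (hf : Continuous f) :
    ∫ s in a..b, (f s - (b - a)⁻¹ * ∫ t in a..b, f t) ^ 2
      = (∫ s in a..b, f s ^ 2) - (b - a)⁻¹ * (∫ s in a..b, f s) ^ 2 := by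
  set c := (b - a)⁻¹ * ∫ t in a..b, f t
  have hf2 : IntervalIntegrable (fun s => f s ^ 2) volume a b := (hf.pow 2).intervalIntegrable a b
  have hcf : IntervalIntegrable (fun s => 2 * c * f s) volume a b :=
    (hf.intervalIntegrable a b).const_mul _
  have hexpand : (fun s => (f s - c) ^ 2) = fun s => (f s ^ 2 - 2 * c * f s) + c ^ 2 := by
    ext s; ring
  rw [hexpand, integral_add (hf2.sub hcf) intervalIntegrable_const, integral_sub hf2 hcf,
    intervalIntegral.integral_const_mul, intervalIntegral.integral_const, smul_eq_mul]
  have hba : b - a ≠ 0 := (sub_pos.2 hab).ne'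
  simp only [c]
  field_simp
  ring

theorem abs_sub_average_le (hab : a < b) (hf : Continuous f) {s : ℝ}
    (hosc : ∀ t ∈ Icc a b, |f s - f t| ≤ ω) :
    |f s - (b - a)⁻¹ * ∫ t in a..b, f t| ≤ ω := by
  have hba : 0 < b - a := sub_pos.2 hab
  have hmean : f s - (b - a)⁻¹ * ∫ t in a..b, f t = (b - a)⁻¹ * ∫ t in a..b, (f s - f t) := by
    rw [integral_sub intervalIntegrable_const (hf.intervalIntegrable a b),
      intervalIntegral.integral_const, smul_eq_mul]
    field_simp
  have hint : |∫ t in a..b, (f s - f t)| ≤ ω * (b - a) := by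
    simpa [abs_of_pos hba] using norm_integral_le_of_norm_le_const (a := a) (b := b)
      (f := fun t => f s - f t) fun t ht =>
        hosc t (Ioc_subset_Icc_self (by rwa [uIoc_of_le hab.le] at ht))
  rw [hmean, abs_mul, abs_of_pos (inv_pos.2 hba), inv_mul_le_iff₀ hba]
  linarith

variable {ι : Type*} [Fintype ι] {φ : ι → ℝ → ℝ}

theorem integral_sq_sub_sum_le (hab : a < b) (hf : Continuous f)
    (hosc : ∀ s ∈ Icc a b, ∀ t ∈ Icc a b, |f s - f t| ≤ ω) (i₀ : ι) (hφ₀ : φ i₀ = fun _ => 1) :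
    (∫ s in a..b, f s ^ 2)
        - ∑ i, (∫ s in a..b, φ i s ^ 2)⁻¹ * (∫ s in a..b, φ i s * f s) ^ 2
      ≤ ω ^ 2 * (b - a) := by
  have hmean_le : (b - a)⁻¹ * (∫ s in a..b, f s) ^ 2
      ≤ ∑ i, (∫ s in a..b, φ i s ^ 2)⁻¹ * (∫ s in a..b, φ i s * f s) ^ 2 := by
    simpa [hφ₀] using Finset.single_le_sum
      (fun i _ => inv_integral_sq_mul_sq_integral_mul_nonneg hab.le (φ i) f) (Finset.mem_univ i₀)
  have hvar : ∫ s in a..b, (f s - (b - a)⁻¹ * ∫ t in a..b, f t) ^ 2 ≤ ω ^ 2 * (b - a) :=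
    integral_sq_le_of_abs_le hab.le (by fun_prop) fun s hs =>
      abs_sub_average_le hab hf (hosc s hs)
  rw [integral_sq_sub_average_sq_eq hab hf] at hvar
  linarith

theorem sum_le_integral_sq_of_ne_zero (hab : a ≤ b) (hf : Continuous f)
    (hne : ∀ s ∈ Ioc a b, f s ≠ 0)
    (horth : Pairwise fun i j => ∫ s in a..b, φ i s * φ j s = 0)
    (hφ2 : ∀ i, IntervalIntegrable (fun s => φ i s ^ 2) volume a b)
    (hφf : ∀ i, IntervalIntegrable (fun s => φ i s * f s) volume a b) :
    ∑ i, (∫ s in a..b, φ i s ^ 2)⁻¹ * (∫ s in a..b, φ i s * f s) ^ 2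
      ≤ ∫ s in a..b, f s ^ 2 := by
  simp only [intervalIntegrable_iff_integrableOn_Ioc_of_le hab] at hφ2 hφf
  simp only [integral_of_le hab] at horth ⊢
  have hφ : ∀ i, MemLp (φ i) 2 (volume.restrict (Ioc a b)) := fun i =>
    (memLp_two_iff_integrable_sq ((hφf i).aestronglyMeasurable.of_mul_of_ne_zero
      hf.aemeasurable (ae_restrict_of_forall_mem measurableSet_Ioc hne))).2 (hφ2 i)
  have hfL : MemLp f 2 (volume.restrict (Ioc a b)) :=
    (memLp_two_iff_integrable_sq hf.aestronglyMeasurable).2 ((hf.pow 2).intervalIntegrable a b).1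
  exact sum_inv_integral_sq_mul_sq_integral_mul_le hφ hfL horth

theorem abs_sum_sub_integral_sq_le (hab : a < b) (hf : Continuous f)
    (hosc : ∀ s ∈ Icc a b, ∀ t ∈ Icc a b, |f s - f t| ≤ ω) (i₀ : ι) (hφ₀ : φ i₀ = fun _ => 1)
    (horth : Pairwise fun i j => ∫ s in a..b, φ i s * φ j s = 0)
    (hφ2 : ∀ i, IntervalIntegrable (fun s => φ i s ^ 2) volume a b)
    (hφf : ∀ i, IntervalIntegrable (fun s => φ i s * f s) volume a b) :
    |∑ i, (∫ s in a..b, φ i s ^ 2)⁻¹ * (∫ s in a..b, φ i s * f s) ^ 2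
        - ∫ s in a..b, f s ^ 2|
      ≤ Fintype.card ι * ω ^ 2 * (b - a) := by
  have hcard : (1 : ℝ) ≤ Fintype.card ι := by exact_mod_cast Fintype.card_pos_iff.2 ⟨i₀⟩
  have hωba : 0 ≤ ω ^ 2 * (b - a) := mul_nonneg (sq_nonneg _) (sub_pos.2 hab).le
  have hS0 : 0 ≤ ∑ i, (∫ s in a..b, φ i s ^ 2)⁻¹ * (∫ s in a..b, φ i s * f s) ^ 2 :=
    Finset.sum_nonneg fun i _ => inv_integral_sq_mul_sq_integral_mul_nonneg hab.le (φ i) f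
  have hE0 : 0 ≤ ∫ s in a..b, f s ^ 2 := integral_nonneg hab.le fun s _ => sq_nonneg _
  rw [abs_sub_le_iff]
  by_cases hzero : ∃ t ∈ Icc a b, f t = 0
  · obtain ⟨t, ht, hft⟩ := hzero
    have hE : ∫ s in a..b, f s ^ 2 ≤ ω ^ 2 * (b - a) :=
      integral_sq_le_of_abs_le hab.le hf fun s hs => by simpa [hft] using hosc s hs t ht
    have hS : ∑ i, (∫ s in a..b, φ i s ^ 2)⁻¹ * (∫ s in a..b, φ i s * f s) ^ 2
        ≤ Fintype.card ι * ∫ s in a..b, f s ^ 2 := by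
      simpa using Finset.sum_le_sum fun i (_ : i ∈ Finset.univ) =>
        inv_integral_sq_mul_sq_integral_mul_le hab.le hf (hφ2 i) (hφf i)
    constructor <;> nlinarith
  · push Not at hzero
    have hbessel := sum_le_integral_sq_of_ne_zero hab.le hf
      (fun s hs => hzero s (Ioc_subset_Icc_self hs)) horth hφ2 hφf
    have hgap := integral_sq_sub_sum_le hab hf hosc i₀ hφ₀
    constructor <;> nlinarith

end Interval

theorem abs_sub_le_min_of_lipschitzWith {f : ℝ → ℝ} {K : NNReal} {M a b h : ℝ}
    (hlip : LipschitzWith K f) (hbd : ∀ s, |f s| ≤ M) (hh : b - a ≤ h) {s t : ℝ}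
    (hs : s ∈ Icc a b) (ht : t ∈ Icc a b) : |f s - f t| ≤ min (K * h) (2 * M) := by
  refine le_min ?_ ?_
  · calc |f s - f t| = dist (f s) (f t) := (Real.dist_eq _ _).symm
      _ ≤ K * dist s t := hlip.dist_le_mul s t
      _ ≤ K * h := by
        gcongr
        rw [Real.dist_eq, abs_le]
        constructor <;> linarith [hs.1, hs.2, ht.1, ht.2]
  · linarith [abs_sub (f s) (f t), hbd s, hbd t]

theorem min_sq_le_rpow_mul_rpow {x y α : ℝ} (hx : 0 ≤ x) (hy : 0 ≤ y) (hα : 0 ≤ α)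
    (hα2 : α ≤ 2) : min x y ^ 2 ≤ x ^ α * y ^ (2 - α) := by
  have hm : 0 ≤ min x y := le_min hx hy
  calc min x y ^ 2 = min x y ^ α * min x y ^ (2 - α) := by
        rw [← Real.rpow_add' hm (by norm_num), add_sub_cancel, Real.rpow_two]
    _ ≤ x ^ α * y ^ (2 - α) := by
        gcongr
        exacts [min_le_left _ _, min_le_right _ _]

section Mesh

variable {N : ℕ} {ι : Type*} [Fintype ι] (x : Fin (N + 1) → ℝ) (φ : Fin N → ι → ℝ → ℝ)

noncomputable def projectionEnergy (f : ℝ → ℝ) : ℝ :=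
  ∑ j, ∑ i, (∫ s in (x j.castSucc)..(x j.succ), φ j i s ^ 2)⁻¹
    * (∫ s in (x j.castSucc)..(x j.succ), φ j i s * f s) ^ 2

theorem abs_projectionEnergy_sub_le {f : ℝ → ℝ} {ω : ℝ}
    (hx : ∀ j : Fin N, x j.castSucc < x j.succ) (hf : Continuous f)
    (hosc : ∀ j : Fin N, ∀ s ∈ Icc (x j.castSucc) (x j.succ),
      ∀ t ∈ Icc (x j.castSucc) (x j.succ), |f s - f t| ≤ ω)
    (i₀ : ι) (hφ₀ : ∀ j, φ j i₀ = fun _ => 1)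
    (horth : ∀ j, Pairwise fun i i' => ∫ s in (x j.castSucc)..(x j.succ), φ j i s * φ j i' s = 0)
    (hφ2 : ∀ (j : Fin N) i,
      IntervalIntegrable (fun s => φ j i s ^ 2) volume (x j.castSucc) (x j.succ))
    (hφf : ∀ (j : Fin N) i,
      IntervalIntegrable (fun s => φ j i s * f s) volume (x j.castSucc) (x j.succ)) :
    |projectionEnergy x φ f - ∑ j : Fin N, ∫ s in (x j.castSucc)..(x j.succ), f s ^ 2|
      ≤ Fintype.card ι * ω ^ 2 * ∑ j : Fin N, (x j.succ - x j.castSucc) := by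
  rw [projectionEnergy, ← Finset.sum_sub_distrib, Finset.mul_sum]
  exact (Finset.abs_sum_le_sum_abs _ _).trans <| Finset.sum_le_sum fun j _ =>
    abs_sum_sub_integral_sq_le (hx j) hf (hosc j) i₀ (hφ₀ j) (horth j) (hφ2 j) (hφf j)

theorem abs_projectionEnergy_sub_le_rpow {f : ℝ → ℝ} {K : NNReal} {M h α : ℝ}
    (hx : ∀ j : Fin N, x j.castSucc < x j.succ) (hxh : ∀ j : Fin N, x j.succ - x j.castSucc ≤ h)
    (hh : 0 ≤ h) (hα : 0 ≤ α) (hα2 : α ≤ 2)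
    (hlip : LipschitzWith K f) (hbd : ∀ s, |f s| ≤ M)
    (i₀ : ι) (hφ₀ : ∀ j, φ j i₀ = fun _ => 1)
    (horth : ∀ j, Pairwise fun i i' => ∫ s in (x j.castSucc)..(x j.succ), φ j i s * φ j i' s = 0)
    (hφ2 : ∀ (j : Fin N) i,
      IntervalIntegrable (fun s => φ j i s ^ 2) volume (x j.castSucc) (x j.succ))
    (hφf : ∀ (j : Fin N) i,
      IntervalIntegrable (fun s => φ j i s * f s) volume (x j.castSucc) (x j.succ)) :
    |projectionEnergy x φ f - ∑ j : Fin N, ∫ s in (x j.castSucc)..(x j.succ), f s ^ 2|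
      ≤ Fintype.card ι * ((K : ℝ) ^ α * h ^ α * (2 * M) ^ (2 - α))
        * ∑ j : Fin N, (x j.succ - x j.castSucc) := by
  have hM : 0 ≤ M := (abs_nonneg _).trans (hbd 0)
  have hmin := min_sq_le_rpow_mul_rpow (mul_nonneg K.2 hh) (by linarith : 0 ≤ 2 * M) hα hα2
  rw [Real.mul_rpow K.2 hh] at hmin
  have hlen : 0 ≤ ∑ j : Fin N, (x j.succ - x j.castSucc) :=
    Finset.sum_nonneg fun j _ => (sub_pos.2 (hx j)).le
  refine (abs_projectionEnergy_sub_le x φ hx hlip.continuous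
    (fun j s hs t ht => abs_sub_le_min_of_lipschitzWith hlip hbd (hxh j) hs ht)
    i₀ hφ₀ horth hφ2 hφf).trans ?_
  gcongr
  exact hmin

theorem sum_inv_mul_tsum_eq_tsum_mul_projectionEnergy {e : ℕ → ℝ → ℝ} {γ : ℕ → ℝ}
    (hx : ∀ j : Fin N, x j.castSucc < x j.succ) (hγ : ∀ m, 0 ≤ γ m) (hsγ : Summable γ)
    (he : ∀ m, Continuous (e m))
    (hφ2 : ∀ (j : Fin N) i,
      IntervalIntegrable (fun s => φ j i s ^ 2) volume (x j.castSucc) (x j.succ))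
    (hφe : ∀ (j : Fin N) i m,
      IntervalIntegrable (fun s => φ j i s * e m s) volume (x j.castSucc) (x j.succ))
    (hnorm : ∀ m, ∑ j : Fin N, ∫ s in (x j.castSucc)..(x j.succ), e m s ^ 2 = 1) :
    ∑ j, ∑ i, (∫ s in (x j.castSucc)..(x j.succ), φ j i s ^ 2)⁻¹
        * ∑' m, (∫ s in (x j.castSucc)..(x j.succ), φ j i s * √(γ m) * e m s) ^ 2
      = ∑' m, γ m * projectionEnergy x φ (e m) := by
  set t : Fin N → ι → ℕ → ℝ := fun j i m =>
    (∫ s in (x j.castSucc)..(x j.succ), φ j i s ^ 2)⁻¹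
      * (∫ s in (x j.castSucc)..(x j.succ), φ j i s * e m s) ^ 2
  -- each term is at most the energy of `e m` on one cell, hence at most `1`
  have ht : ∀ j i, Summable fun m => γ m * t j i m := by
    intro j i
    refine hsγ.of_nonneg_of_le (fun m => mul_nonneg (hγ m)
      (inv_integral_sq_mul_sq_integral_mul_nonneg (hx j).le _ _)) fun m => ?_
    refine mul_le_of_le_one_right (hγ m) ?_
    calc t j i m ≤ ∫ s in (x j.castSucc)..(x j.succ), e m s ^ 2 :=
          inv_integral_sq_mul_sq_integral_mul_le (hx j).le (he m) (hφ2 j i) (hφe j i m)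
      _ ≤ ∑ j : Fin N, ∫ s in (x j.castSucc)..(x j.succ), e m s ^ 2 :=
          Finset.single_le_sum (f := fun j : Fin N => ∫ s in (x j.castSucc)..(x j.succ), e m s ^ 2)
            (fun j _ => integral_nonneg (hx j).le fun s _ => sq_nonneg _) (Finset.mem_univ j)
      _ = 1 := hnorm m
  have hsqrt : ∀ (j : Fin N) i m,
      (∫ s in (x j.castSucc)..(x j.succ), φ j i s * √(γ m) * e m s) ^ 2
        = γ m * (∫ s in (x j.castSucc)..(x j.succ), φ j i s * e m s) ^ 2 := by
    intro j i m
    have hcomm : (fun s => φ j i s * √(γ m) * e m s) = fun s => √(γ m) * (φ j i s * e m s) := by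
      ext s; ring
    rw [hcomm, intervalIntegral.integral_const_mul, mul_pow, Real.sq_sqrt (hγ m)]
  simp only [hsqrt, ← tsum_mul_left, projectionEnergy, Finset.mul_sum]
  rw [Summable.tsum_finsetSum fun j _ => summable_sum fun i _ => ht j i]
  refine Finset.sum_congr rfl fun j _ => ?_
  rw [Summable.tsum_finsetSum fun i _ => ht j i]
  refine Finset.sum_congr rfl fun i _ => tsum_congr fun m => ?_
  ring

end Mesh

theorem abs_tsum_sub_tsum_le {β : Type*} {u v w : β → ℝ} (hv : Summable v) (hw : Summable w)
    (huv : ∀ m, |u m - v m| ≤ w m) : |∑' m, u m - ∑' m, v m| ≤ ∑' m, w m := by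
  have huv' : Summable fun m => u m - v m := hw.of_norm_bounded huv
  rw [← (by simpa using huv'.add hv : Summable u).tsum_sub hv]
  exact tsum_of_norm_bounded (f := fun m => u m - v m) hw.hasSum huv
/-- If the eigenfunctions `e_m` are uniformly bounded and Lipschitz with constants
`K_m` such that `∑ γ_m K_m^α < ∞` for some `α ∈ (0,2]`, then the discrete energy-law
constant `K` satisfies `|K - Tr(Q)| ≤ C h^α` with `C` independent of the mesh,
provided the total mesh length stays bounded by `C'`. -/
theorem stmt_3 (e : ℕ → ℝ → ℝ) (γ Km : ℕ → ℝ) (M : ℝ) (α : ℝ)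
    (hα : 0 < α) (hα2 : α ≤ 2) (k : ℕ) (C' : ℝ)
    (hγ : ∀ m, 0 ≤ γ m) (hsγ : Summable γ) (hKm : ∀ m, 0 ≤ Km m)
    (hlip : ∀ m, LipschitzWith (Real.toNNReal (Km m)) (e m))
    (hbd : ∀ m s, |e m s| ≤ M)
    (hsum : Summable fun m => γ m * Km m ^ α) :
    ∃ C : ℝ, 0 < C ∧
      ∀ (N : ℕ) (x : Fin (N + 1) → ℝ) (φ : Fin N → Fin (k + 1) → ℝ → ℝ) (h : ℝ),
        0 < h →
        (∀ j : Fin N, x j.castSucc < x j.succ) →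
        (∀ j : Fin N, x j.succ - x j.castSucc ≤ h) →
        (∑ j : Fin N, (x j.succ - x j.castSucc)) ≤ C' →
        (∀ j : Fin N, φ j 0 = fun _ => 1) →
        (∀ j : Fin N, ∀ l : Fin (k + 1), l ≠ 0 →
          (∫ s in (x j.castSucc)..(x j.succ), φ j l s) = 0) →
        (∀ j : Fin N, ∀ l l' : Fin (k + 1), l ≠ l' →
          (∫ s in (x j.castSucc)..(x j.succ), φ j l s * φ j l' s) = 0) →
        (∀ j l, 0 < ∫ s in (x j.castSucc)..(x j.succ), (φ j l s) ^ 2) →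
        (∀ j l m, IntervalIntegrable (fun s => φ j l s * e m s) volume
          (x j.castSucc) (x j.succ)) →
        (∀ j l, IntervalIntegrable (fun s => (φ j l s) ^ 2) volume
          (x j.castSucc) (x j.succ)) →
        (∀ m, (∑ j : Fin N, ∫ s in (x j.castSucc)..(x j.succ), (e m s) ^ 2) = 1) →
        |(∑ j : Fin N, ∑ l : Fin (k + 1),
            (∫ s in (x j.castSucc)..(x j.succ), (φ j l s) ^ 2)⁻¹
              * ∑' m : ℕ,
                  (∫ s in (x j.castSucc)..(x j.succ),
                    φ j l s * Real.sqrt (γ m) * e m s) ^ 2)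
          - ∑' m : ℕ, γ m| ≤ C * h ^ α := by
  have hM : 0 ≤ M := (abs_nonneg _).trans (hbd 0 0)
  set B : ℝ := (k + 1) * (2 * M) ^ (2 - α) * |C'|
  have hB : 0 ≤ B := by positivity
  have hT : 0 ≤ ∑' m, γ m * Km m ^ α :=
    tsum_nonneg fun m => mul_nonneg (hγ m) (Real.rpow_nonneg (hKm m) α)
  refine ⟨B * ∑' m, γ m * Km m ^ α + 1, by positivity, ?_⟩
  intro N x φ h hh hx hxh hC' hφ₀ _ horth _ hφe hφ2 hnorm
  have hmode : ∀ m, |γ m * projectionEnergy x φ (e m) - γ m| ≤ γ m * Km m ^ α * (B * h ^ α) := by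
    intro m
    have hm := abs_projectionEnergy_sub_le_rpow x φ hx hxh hh.le hα.le hα2 (hlip m) (hbd m) 0
      hφ₀ horth hφ2 fun j l => hφe j l m
    rw [hnorm m, Fintype.card_fin, Real.coe_toNNReal _ (hKm m)] at hm
    rw [← mul_sub_one, abs_mul, abs_of_nonneg (hγ m), mul_assoc]
    refine mul_le_mul_of_nonneg_left (hm.trans ?_) (hγ m)
    calc _ ≤ (k + 1) * (Km m ^ α * h ^ α * (2 * M) ^ (2 - α)) * |C'| := by
          push_cast
          gcongr
          · exact mul_nonneg (by positivity) (mul_nonneg (mul_nonneg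
              (Real.rpow_nonneg (hKm m) _) (by positivity)) (by positivity))
          · exact hC'.trans (le_abs_self _)
      _ = Km m ^ α * (B * h ^ α) := by ring
  rw [sum_inv_mul_tsum_eq_tsum_mul_projectionEnergy x φ hx hγ hsγ (fun m => (hlip m).continuous)
    hφ2 hφe hnorm]
  calc _ ≤ ∑' m, γ m * Km m ^ α * (B * h ^ α) :=
        abs_tsum_sub_tsum_le hsγ (hsum.mul_right _) hmode
    _ = B * (∑' m, γ m * Km m ^ α) * h ^ α := by rw [tsum_mul_right]; ring
    _ ≤ (B * ∑' m, γ m * Km m ^ α + 1) * h ^ α := by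
        gcongr
        linarith
end

section
/- Let $K$ be a real anti-symmetric $d\times d$ matrix and $A$ a real symmetric $d\times d$ matrix. For vectors $u^-, u^+, v^-, v^+ \in \mathbb{R}^d$, define the numerical flux $\widehat{Ku} = K\{u\} + A[u]$ where $\{u\} = \frac{1}{2}(u^+ + u^-)$ and $[u] = u^+ - u^-$, and similarly for $v$. Then $K u^- \cdot v^- - \widehat{Ku}\cdot v^- + \widehat{Kv}\cdot u^- = K u^+ \cdot v^+ - \widehat{Ku}\cdot v^+ + \widehat{Kv}\cdot u^+$, and both sides equal $\{Ku\cdot v\} - \widehat{Ku}\cdot\{v\} + \widehat{Kv}\cdot\{u\}$, where $\{Ku\cdot v\} = \frac{1}{2}(Ku^+\cdot v^+ + Ku^-\cdot v^-)$. -/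
open Matrix

/-- The numerical flux `K{u} + A[u]`. -/
noncomputable def hatFlux {d : ℕ} (K A : Matrix (Fin d) (Fin d) ℝ)
    (um up : Fin d → ℝ) : Fin d → ℝ :=
  K.mulVec ((1 / 2 : ℝ) • (up + um)) + A.mulVec (up - um)

lemma skew_dot {d : ℕ} {K : Matrix (Fin d) (Fin d) ℝ} (hK : Kᵀ = -K)
    (x y : Fin d → ℝ) : K.mulVec x ⬝ᵥ y = -(K.mulVec y ⬝ᵥ x) := by
  rw [dotProduct_comm, Matrix.dotProduct_mulVec, ← Matrix.mulVec_transpose, hK,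
    Matrix.neg_mulVec, neg_dotProduct]

lemma symm_dot {d : ℕ} {A : Matrix (Fin d) (Fin d) ℝ} (hA : Aᵀ = A)
    (x y : Fin d → ℝ) : A.mulVec x ⬝ᵥ y = A.mulVec y ⬝ᵥ x := by
  rw [dotProduct_comm, Matrix.dotProduct_mulVec, ← Matrix.mulVec_transpose, hA]

/-- Single-valuedness of the multi-symplectic flux function `𝓕_K`. -/
theorem stmt_5 {d : ℕ} (K A : Matrix (Fin d) (Fin d) ℝ) (hK : Kᵀ = -K) (hA : Aᵀ = A)
    (um up vm vp : Fin d → ℝ) :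
    (K.mulVec um ⬝ᵥ vm - hatFlux K A um up ⬝ᵥ vm + hatFlux K A vm vp ⬝ᵥ um
      = K.mulVec up ⬝ᵥ vp - hatFlux K A um up ⬝ᵥ vp + hatFlux K A vm vp ⬝ᵥ up) ∧
    (K.mulVec up ⬝ᵥ vp - hatFlux K A um up ⬝ᵥ vp + hatFlux K A vm vp ⬝ᵥ up
      = (1 / 2 : ℝ) * (K.mulVec up ⬝ᵥ vp + K.mulVec um ⬝ᵥ vm)
        - hatFlux K A um up ⬝ᵥ ((1 / 2 : ℝ) • (vp + vm))
        + hatFlux K A vm vp ⬝ᵥ ((1 / 2 : ℝ) • (up + um))) := by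
  simp only [hatFlux, add_dotProduct, Matrix.mulVec_add, Matrix.mulVec_sub,
    Matrix.mulVec_smul, smul_dotProduct, dotProduct_smul,
    dotProduct_add, sub_dotProduct, smul_eq_mul,
    skew_dot hK vp um, skew_dot hK vm um, skew_dot hK vp up, skew_dot hK vm up,
    symm_dot hA vp um, symm_dot hA vm um, symm_dot hA vp up, symm_dot hA vm up]
  constructor <;> ring
end
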